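/- Let $\mathcal{D}$ be a Krull–Schmidt triangulated category with t-structure $t$, and let $f \colon P \to P'$ be a morphism between derived projective objects. Then the following are equivalent: (i) $f$ is a split epimorphism; (ii) $\mathrm{cone}(f) \in \mathcal{D}^{t<0}$; (iii) $H_t^0(f)$ is an epimorphism in $\heartsuit_t$; (iv) $H_t^0(f)$ is a split epimorphism in $\heartsuit_t$. -/

import Mathlib

open CategoryTheory Limits Pretriangulated

namespace Paper

universe v u

variable {C : Type u} [Category.{v} C] [Preadditive C] [HasZeroObject C]
  [HasShift C ℤ] [∀ n : ℤ, (shiftFunctor C n).Additive] [Pretriangulated C]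

open CategoryTheory.Triangulated

/-- The right perpendicular of a class of objects. -/
def rPerp (T : Set C) : Set C := {Y | ∀ X ∈ T, ∀ f : X ⟶ Y, f = 0}

/-- The left perpendicular of a class of objects. -/
def lPerp (T : Set C) : Set C := {X | ∀ Y ∈ T, ∀ f : X ⟶ Y, f = 0}

/-- `S^{⊥_{>0}}`. -/
def perpGT (S : Set C) : Set C := {X | ∀ P ∈ S, ∀ m : ℤ, 0 < m → ∀ f : P ⟶ X⟦m⟧, f = 0}

/-- `S^{⊥_{<0}}`. -/
def perpLT (S : Set C) : Set C := {X | ∀ P ∈ S, ∀ m : ℤ, m < 0 → ∀ f : P ⟶ X⟦m⟧, f = 0}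

/-- The pair `(S^{⊥_{>0}}, S^{⊥_{<0}})` is the t-structure `t`. -/
def IsSiltingTStructureFor (S : Set C) (t : TStructure C) : Prop :=
  (∀ X : C, t.le 0 X ↔ X ∈ perpGT S) ∧ (∀ X : C, t.ge 0 X ↔ X ∈ perpLT S)

/-- `X` is a retract (direct summand) of `Y`. -/
def IsRetractOf (X Y : C) : Prop := ∃ (i : X ⟶ Y) (r : Y ⟶ X), i ≫ r = 𝟙 X


/-- An indecomposable object: nonzero, and not a nontrivial biproduct. -/
def IndecObj {A : Type*} [Category A] [Limits.HasZeroMorphisms A]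
    [HasBinaryBiproducts A] (X : A) : Prop :=
  ¬ IsZero X ∧ ∀ Y Z : A, Nonempty (X ≅ Y ⊞ Z) → IsZero Y ∨ IsZero Z

section Biprod
variable [HasFiniteBiproducts C]

/-- The Karoubi closure: direct summands of finite coproducts of objects of `S`. -/
def Kar (S : Set C) : Set C :=
  {X | ∃ (n : ℕ) (f : Fin n → C), (∀ i, f i ∈ S) ∧ IsRetractOf X (⨁ f)}

/-- A class of objects is Krull–Schmidt: every object is a finite biproduct of
objects of the class with local endomorphism rings. -/
def KrullSchmidtOn (T : Set C) : Prop :=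
  ∀ X ∈ T, ∃ (n : ℕ) (f : Fin n → C),
    (∀ i, f i ∈ T ∧ IsLocalRing (End (f i))) ∧ Nonempty (X ≅ ⨁ f)

/-- The category `C` is Krull–Schmidt. -/
def IsKrullSchmidt : Prop :=
  ∀ X : C, ∃ (n : ℕ) (f : Fin n → C),
    (∀ i, IsLocalRing (End (f i))) ∧ Nonempty (X ≅ ⨁ f)

/-- A silting collection: pairwise non-isomorphic indecomposables whose Karoubi
closure is Krull–Schmidt, such that the perpendicular pair is the t-structure `t`. -/
structure IsSiltingCollection (S : Set C) (t : TStructure C) : Prop where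
  indec : ∀ P ∈ S, IndecObj P
  pairwise_noniso : ∀ P ∈ S, ∀ Q ∈ S, P ≠ Q → IsEmpty (P ≅ Q)
  kar_ks : KrullSchmidtOn (Kar S)
  tstr : IsSiltingTStructureFor S t

end Biprod

/-- Derived projective objects with respect to a t-structure. -/
def IsDerivedProjective (t : TStructure C) (P : C) : Prop :=
  t.le 0 P ∧ ∀ (X : C), t.le 0 X → ∀ f : P ⟶ X⟦(1 : ℤ)⟧, f = 0

/-- The heart of a t-structure, as a class of objects. -/
def heartSet (t : TStructure C) : Set C := {X | t.le 0 X ∧ t.ge 0 X}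

/-- The heart of a t-structure, as a full subcategory. -/
abbrev Heart (t : TStructure C) := ObjectProperty.FullSubcategory (heartSet t)

instance (t : TStructure C) : Category (Heart t) := ObjectProperty.FullSubcategory.category _

instance (P : C → Prop) : Preadditive (ObjectProperty.FullSubcategory P) where
  homGroup X Y := InducedCategory.homEquiv.addCommGroup
  add_comp _ _ _ _ _ _ := by ext; apply Preadditive.add_comp
  comp_add _ _ _ _ _ _ := by ext; apply Preadditive.comp_add

/-- Truncation data for a t-structure: the truncation functors `t_{≤0}` (right adjoint
to the inclusion of `D^{t≤0}`), `t_{≥0}` (left adjoint to the inclusion of `D^{t≥0}`),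
and the zeroth cohomology functor `H = t_{≤0} ∘ t_{≥0}`. -/
structure TruncationData (t : TStructure C) where
  /-- the zeroth cohomology functor -/
  H : C ⥤ C
  H_heart : ∀ X : C, H.obj X ∈ heartSet t
  τle : C ⥤ C
  τleCounit : τle ⟶ 𝟭 C
  τle_mem : ∀ X : C, t.le 0 (τle.obj X)
  τle_fac : ∀ (X Z : C), t.le 0 Z → ∀ f : Z ⟶ X,
    ∃! g : Z ⟶ τle.obj X, g ≫ τleCounit.app X = f
  τge : C ⥤ C
  τgeUnit : 𝟭 C ⟶ τge
  τge_mem : ∀ X : C, t.ge 0 (τge.obj X)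
  τge_fac : ∀ (X Z : C), t.ge 0 Z → ∀ f : X ⟶ Z,
    ∃! g : τge.obj X ⟶ Z, τgeUnit.app X ≫ g = f
  H_eq : H = τge ⋙ τle

/-- The zeroth cohomology functor, valued in the heart. -/
def TruncationData.Hh {t : TStructure C} (TD : TruncationData t) : C ⥤ Heart t :=
  ObjectProperty.lift _ TD.H TD.H_heart

/-- A projective cover: an essential epimorphism from a projective object. -/
def IsProjectiveCover {A : Type*} [Category A] {P X : A} (π : P ⟶ X) : Prop :=
  Projective P ∧ Epi π ∧ ∀ (R : A) (g : R ⟶ P), Epi (g ≫ π) → Epi g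

/-- A derived projective cover of `X`. -/
def IsDerivedProjectiveCover {t : TStructure C} (TD : TruncationData t)
    {P X : C} (π : P ⟶ X) : Prop :=
  IsDerivedProjective t P ∧ IsProjectiveCover (TD.Hh.map π)

/-- A t-structure is non-degenerate. -/
def NonDegenerate (t : TStructure C) : Prop :=
  (∀ X : C, (∀ n : ℤ, t.le n X) → IsZero X) ∧ (∀ X : C, (∀ n : ℤ, t.ge n X) → IsZero X)

/-- An object of a category has finite length: bounded chains of subobjects. -/
def FiniteLengthObj {A : Type*} [Category A] (X : A) : Prop :=
  ∃ n : ℕ, ∀ s : Fin (n + 1) → Subobject X, ¬ StrictMono s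

/-- `D` has derived projectives: every projective of the heart is `H⁰` of a
derived projective. -/
def HasDerivedProjectives {t : TStructure C} (TD : TruncationData t) : Prop :=
  ∀ Q : Heart t, Projective Q → ∃ P : C, IsDerivedProjective t P ∧ Nonempty (TD.Hh.obj P ≅ Q)

/-- `D` has enough derived projectives. -/
def HasEnoughDerivedProjectives {t : TStructure C} (TD : TruncationData t) : Prop :=
  EnoughProjectives (Heart t) ∧ HasDerivedProjectives TD

/-- The extension closure of a class of objects. -/
inductive ExtClos (T : Set C) : C → Prop
  | of {X : C} : X ∈ T → ExtClos T X
  | zero {X : C} : IsZero X → ExtClos T X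
  | ext {A E B : C} (f : A ⟶ E) (g : E ⟶ B) (h : B ⟶ A⟦(1 : ℤ)⟧) :
      Triangle.mk f g h ∈ (distTriang C) → ExtClos T A → ExtClos T B → ExtClos T E

/-- The Karoubi (retract) closure of a class of objects. -/
def KarClos (T : Set C) : Set C := {X | ∃ Y ∈ T, IsRetractOf X Y}

/-- The triangulated subcategory generated by a class of objects. -/
inductive TriaClos (T : Set C) : C → Prop
  | of {X : C} : X ∈ T → TriaClos T X
  | zero {X : C} : IsZero X → TriaClos T X
  | shift {X : C} (n : ℤ) : TriaClos T X → TriaClos T (X⟦n⟧)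
  | ext {A E B : C} (f : A ⟶ E) (g : E ⟶ B) (h : B ⟶ A⟦(1 : ℤ)⟧) :
      Triangle.mk f g h ∈ (distTriang C) → TriaClos T A → TriaClos T B → TriaClos T E

/-- The thick subcategory generated by a class of objects. -/
inductive ThickClos (T : Set C) : C → Prop
  | of {X : C} : X ∈ T → ThickClos T X
  | zero {X : C} : IsZero X → ThickClos T X
  | shift {X : C} (n : ℤ) : ThickClos T X → ThickClos T (X⟦n⟧)
  | ext {A E B : C} (f : A ⟶ E) (g : E ⟶ B) (h : B ⟶ A⟦(1 : ℤ)⟧) :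
      Triangle.mk f g h ∈ (distTriang C) → ThickClos T A → ThickClos T B → ThickClos T E
  | retract {X Y : C} : IsRetractOf X Y → ThickClos T Y → ThickClos T X

/-- A thick subcategory, as a class of objects. -/
structure IsThickSet (T : Set C) : Prop where
  zero : ∀ X : C, IsZero X → X ∈ T
  shift : ∀ X ∈ T, ∀ n : ℤ, X⟦n⟧ ∈ T
  ext : ∀ (A E B : C) (f : A ⟶ E) (g : E ⟶ B) (h : B ⟶ A⟦(1 : ℤ)⟧),
    Triangle.mk f g h ∈ (distTriang C) → A ∈ T → B ∈ T → E ∈ T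
  retract : ∀ X Y : C, IsRetractOf X Y → Y ∈ T → X ∈ T

/-- A weight structure on the subcategory of `C` given by the class `CC`. -/
structure WeightStructureOn (CC : Set C) where
  le : Set C
  ge : Set C
  le_sub : le ⊆ CC
  ge_sub : ge ⊆ CC
  le_iso : ∀ X Y : C, (X ≅ Y) → X ∈ le → Y ∈ le
  ge_iso : ∀ X Y : C, (X ≅ Y) → X ∈ ge → Y ∈ ge
  le_retract : ∀ X Y : C, IsRetractOf X Y → Y ∈ le → X ∈ le
  ge_retract : ∀ X Y : C, IsRetractOf X Y → Y ∈ ge → X ∈ ge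
  le_shift : ∀ X ∈ le, X⟦(1 : ℤ)⟧ ∈ le
  ge_shift : ∀ X ∈ ge, X⟦(-1 : ℤ)⟧ ∈ ge
  orth : ∀ X : C, X⟦(1 : ℤ)⟧ ∈ ge → ∀ Y ∈ le, ∀ f : X ⟶ Y, f = 0
  decomp : ∀ X ∈ CC, ∃ (A B : C) (f : A ⟶ X) (g : X ⟶ B) (h : B ⟶ A⟦(1 : ℤ)⟧),
    Triangle.mk f g h ∈ (distTriang C) ∧ A⟦(1 : ℤ)⟧ ∈ ge ∧ B ∈ le

namespace WeightStructureOn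

variable {CC : Set C} (w : WeightStructureOn CC)

/-- `C_{w>0}`. -/
def gt : Set C := {X | X⟦(1 : ℤ)⟧ ∈ w.ge}

/-- `C_{w<0}`. -/
def lt : Set C := {X | X⟦(-1 : ℤ)⟧ ∈ w.le}

end WeightStructureOn

/-!
If the cone `Z` of `f` lies in `D^{t≤-1}`, the map `P' → Z` vanishes because `P'` is derived
projective, so `f` is an epimorphism, and epimorphisms split in a pretriangulated category.
Conversely, if `H⁰(f)` is an epimorphism, then `Z` lies in `D^{t≤0}` and admits no nonzero map
`φ` to the heart: the composite `P' → Z → Y` kills `f`, and on `D^{t≤0}` maps to the heart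
factor uniquely through `H⁰ = τ≤0 τ≥0`, so it vanishes because `H⁰(f)` is epi; hence `φ`
factors through `P[1] ∈ D^{t≤-1}` and vanishes too. An object of `D^{t≤0}` without nonzero maps
to the heart has zero truncation `τ≥0`, i.e. lies in `D^{t≤-1}`.
-/

lemma isLE_neg_one_of_hom_to_heart_eq_zero (t : TStructure C) {Z : C} [t.IsLE Z 0]
    (hZ : ∀ Y ∈ heartSet t, ∀ φ : Z ⟶ Y, φ = 0) : t.IsLE Z (-1) := by
  rw [t.isLE_iff_isZero_truncGE_obj (-1) 0 (by omega), IsZero.iff_id_eq_zero]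
  have : t.IsLE ((t.truncLT 0).obj Z) 1 := t.isLE_truncLT_obj Z 0 1
  have := t.isLE_shift ((t.truncLT 0).obj Z) 1 1 0
  have : t.IsLE ((t.truncGE 0).obj Z) 0 :=
    t.isLE₂ _ (rot_of_distTriang _ (t.triangleLTGE_distinguished 0 Z)) 0 ‹_› this
  have hW : (t.truncGE 0).obj Z ∈ heartSet t := ⟨t.le_of_isLE _ 0, t.ge_of_isGE _ 0⟩
  exact t.from_truncGE_obj_ext (by rw [hZ _ hW ((t.truncGEπ 0).app Z), zero_comp, comp_zero])

lemma IsDerivedProjective.hom_eq_zero_of_le_neg_one {t : TStructure C} {P Z : C}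
    (hP : IsDerivedProjective t P) (hZ : t.le (-1) Z) (g : P ⟶ Z) : g = 0 := by
  let e : Z⟦(-1 : ℤ)⟧⟦(1 : ℤ)⟧ ≅ Z := (shiftEquiv C (1 : ℤ)).counitIso.app Z
  have hg : g ≫ e.inv = 0 := hP.2 _ (t.le_shift (-1) (-1) 0 (by omega) Z hZ) _
  rw [← cancel_mono e.inv, hg, zero_comp]

namespace TruncationData

variable {t : TStructure C} (TD : TruncationData t)

lemma τle_hom_ext {X Z : C} (hZ : t.le 0 Z) {g₁ g₂ : Z ⟶ TD.τle.obj X}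
    (h : g₁ ≫ TD.τleCounit.app X = g₂ ≫ TD.τleCounit.app X) : g₁ = g₂ :=
  (TD.τle_fac X Z hZ _).unique h rfl

lemma τge_hom_ext {X Z : C} (hZ : t.ge 0 Z) {g₁ g₂ : TD.τge.obj X ⟶ Z}
    (h : TD.τgeUnit.app X ≫ g₁ = TD.τgeUnit.app X ≫ g₂) : g₁ = g₂ :=
  (TD.τge_fac X Z hZ _).unique h rfl

lemma isIso_τleCounit_app {X : C} (hX : t.le 0 X) : IsIso (TD.τleCounit.app X) := by
  obtain ⟨j, hj, -⟩ := TD.τle_fac X X hX (𝟙 X)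
  exact ⟨j, TD.τle_hom_ext (TD.τle_mem X) (by simp [hj]), hj⟩

lemma le_zero_τge_obj {X : C} (hX : t.le 0 X) : t.le 0 (TD.τge.obj X) := by
  have : t.IsLE X 0 := ⟨hX⟩
  rw [t.le_iff_isLE, t.isLE_iff_orthogonal 0 1 rfl]
  intro Y g hY
  refine TD.τge_hom_ext (t.ge_antitone (show (0 : ℤ) ≤ 1 by omega) Y hY.ge) ?_
  rw [t.zero_of_isLE_of_isGE (TD.τgeUnit.app X ≫ g) 0 1 (by omega) ‹_› hY, comp_zero]

lemma eq_zero_of_τle_τge_map_comp_eq_zero {X X' Y : C} (f : X ⟶ X') [hf : Epi (TD.Hh.map f)]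
    (hY : Y ∈ heartSet t) {a : TD.τle.obj (TD.τge.obj X') ⟶ Y}
    (ha : TD.τle.map (TD.τge.map f) ≫ a = 0) : a = 0 := by
  obtain ⟨H, hH, τle, ε, _, _, τge, η, _, _, rfl⟩ := TD
  exact congrArg InducedCategory.Hom.hom (hf.left_cancellation
    (ObjectProperty.homMk (Y := ⟨Y, hY⟩) a) (ObjectProperty.homMk 0)
    (by ext; exact ha.trans comp_zero.symm))

lemma eq_zero_of_epi_Hh_map {X X' Y : C} (hX' : t.le 0 X') (f : X ⟶ X') [Epi (TD.Hh.map f)]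
    (hY : Y ∈ heartSet t) (φ : X' ⟶ Y) (hφ : f ≫ φ = 0) : φ = 0 := by
  obtain ⟨φ₁, rfl⟩ : ∃ φ₁, TD.τgeUnit.app X' ≫ φ₁ = φ := (TD.τge_fac X' Y hY.2 φ).exists
  have hfφ₁ : TD.τge.map f ≫ φ₁ = 0 := TD.τge_hom_ext hY.2 (by
    rw [← Category.assoc, ← TD.τgeUnit.naturality f, Functor.id_map, Category.assoc, hφ,
      comp_zero])
  have := TD.isIso_τleCounit_app (TD.le_zero_τge_obj hX')
  have hεφ₁ : TD.τleCounit.app _ ≫ φ₁ = 0 := TD.eq_zero_of_τle_τge_map_comp_eq_zero f hY (by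
    rw [← Category.assoc, TD.τleCounit.naturality, Functor.id_map, Category.assoc, hfφ₁,
      comp_zero])
  rw [(Preadditive.IsIso.comp_left_eq_zero _ _).1 hεφ₁, comp_zero]

end TruncationData

lemma cone_le_neg_one_of_epi_Hh_map {t : TStructure C} (TD : TruncationData t) {P P' Z : C}
    (hP : t.le 0 P) (hP' : t.le 0 P') {f : P ⟶ P'} [Epi (TD.Hh.map f)] {g : P' ⟶ Z}
    {h : Z ⟶ P⟦(1 : ℤ)⟧} (hT : Triangle.mk f g h ∈ distTriang C) : t.le (-1) Z := by
  have : t.IsLE P 0 := ⟨hP⟩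
  have : t.IsLE (P⟦(1 : ℤ)⟧) (-1) := t.isLE_shift P 0 1 (-1)
  have : t.IsLE Z 0 :=
    t.isLE₂ _ (rot_of_distTriang _ hT) 0 ⟨hP'⟩ (t.isLE_of_le (P⟦(1 : ℤ)⟧) (-1) 0)
  refine (t.le_iff_isLE Z (-1)).2 (isLE_neg_one_of_hom_to_heart_eq_zero t fun Y hY φ ↦ ?_)
  have hgφ : g ≫ φ = 0 := TD.eq_zero_of_epi_Hh_map hP' f hY _ (by
    rw [← Category.assoc, show f ≫ g = 0 from comp_distTriang_mor_zero₁₂ _ hT, zero_comp])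
  obtain ⟨ψ, rfl⟩ := Triangle.yoneda_exact₃ _ hT φ hgφ
  rw [t.zero_of_isLE_of_isGE ψ (-1) 0 (by omega) ‹_› ⟨hY.2⟩]
  exact comp_zero

theorem derivedProjective_split_epi_tfae_general
    (t : TStructure C) (TD : TruncationData t)
    {P P' : C} (hP : IsDerivedProjective t P) (hP' : IsDerivedProjective t P')
    (f : P ⟶ P') :
    List.TFAE [
      ∃ s : P' ⟶ P, s ≫ f = 𝟙 P',
      ∃ (Z : C) (g : P' ⟶ Z) (h : Z ⟶ P⟦(1 : ℤ)⟧),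
        Triangle.mk f g h ∈ (distTriang C) ∧ t.le (-1) Z,
      Epi (TD.Hh.map f),
      ∃ s : TD.Hh.obj P' ⟶ TD.Hh.obj P, s ≫ TD.Hh.map f = 𝟙 (TD.Hh.obj P')] := by
  tfae_have 1 → 4
  | ⟨s, hs⟩ => ⟨TD.Hh.map s, by rw [← TD.Hh.map_comp, hs, TD.Hh.map_id]⟩
  tfae_have 4 → 3
  | ⟨s, hs⟩ => (IsSplitEpi.mk' ⟨s, hs⟩).epi
  tfae_have 3 → 2 := fun _ ↦
    have ⟨Z, g, h, hT⟩ := distinguished_cocone_triangle f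
    ⟨Z, g, h, hT, cone_le_neg_one_of_epi_Hh_map TD hP.1 hP'.1 hT⟩
  tfae_have 2 → 1
  | ⟨Z, g, h, hT, hZ⟩ =>
    have : Epi f := Triangle.epi₁ _ hT (hP'.hom_eq_zero_of_le_neg_one hZ g)
    have : IsSplitEpi f := isSplitEpi_of_epi f
    ⟨section_ f, IsSplitEpi.id f⟩
  tfae_finish

/-- characterizations of split epimorphisms between derived projectives. -/
theorem derivedProjective_split_epi_tfae [HasFiniteBiproducts C]
    (hKS : IsKrullSchmidt (C := C)) (t : TStructure C) (TD : TruncationData t)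
    {P P' : C} (hP : IsDerivedProjective t P) (hP' : IsDerivedProjective t P')
    (f : P ⟶ P') :
    List.TFAE [
      ∃ s : P' ⟶ P, s ≫ f = 𝟙 P',
      ∃ (Z : C) (g : P' ⟶ Z) (h : Z ⟶ P⟦(1 : ℤ)⟧),
        Triangle.mk f g h ∈ (distTriang C) ∧ t.le (-1) Z,
      Epi (TD.Hh.map f),
      ∃ s : TD.Hh.obj P' ⟶ TD.Hh.obj P, s ≫ TD.Hh.map f = 𝟙 (TD.Hh.obj P')] :=
  derivedProjective_split_epi_tfae_general t TD hP hP' f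

end Paper
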